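/- Under the assumptions of Lemma 2 (α extended class-K, continuously differentiable with nonincreasing derivative on (βξ, ξ); ψ identity below βξ with ψ' > 0 nonincreasing and ψ'' < 0 on (βξ, ξ)), the function α₂(η) = α(ψ(η))/ψ'(η) is strictly increasing on (0, ξ) and satisfies α₂(0) = 0; i.e., α₂ restricted to [0, ξ) is a class-K function. -/

import Mathlib

/-!
Below `βξ` the map `ψ` is the identity, so `α₂ = α` there. On `[βξ, ξ)` the strict concavity
of `ψ` with `ψ'(βξ) = 1` gives `ψ' < 1`, hence `βξ < ψ η < η`, so `α` is differentiable at `ψ η`.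
The quotient rule then gives
`α₂' = (α'(ψ) ψ'² - α(ψ) ψ'') / ψ'² > 0`, because `α' ≥ 0`, `α(ψ) > 0` and `ψ'' < 0`.
-/

open Set

theorem StrictMonoOn.Iio_of_Iic_of_Ico {α β : Type*} [LinearOrder α] [Preorder β] {f : α → β}
    {b c : α} (h₁ : StrictMonoOn f (Iic b)) (h₂ : StrictMonoOn f (Ico b c)) :
    StrictMonoOn f (Iio c) := by
  intro x hx y hy hxy
  rcases le_or_gt y b with hyb | hby
  · exact h₁ (hxy.le.trans hyb) hyb hxy
  rcases le_or_gt x b with hxb | hbx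
  · exact (h₁.monotoneOn hxb le_rfl hxb).trans_lt (h₂ ⟨le_rfl, hby.trans hy⟩ ⟨hby.le, hy⟩ hby)
  · exact h₂ ⟨hbx.le, hx⟩ ⟨hby.le, hy⟩ hxy

theorem deriv_div_pos_of_hasDerivAt {f g : ℝ → ℝ} {f' g' x : ℝ} (hf : HasDerivAt f f' x)
    (hg : HasDerivAt g g' x) (hf0 : 0 < f x) (hf' : 0 ≤ f') (hg0 : 0 < g x) (hg' : g' < 0) :
    0 < deriv (f / g) x := by
  rw [(hf.div hg hg0.ne').deriv]
  have hnum : 0 < f' * g x - f x * g' := by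
    nlinarith [mul_nonneg hf' hg0.le, mul_pos hf0 (neg_pos.2 hg')]
  positivity

theorem deriv_eq_one_of_eq_self_Iic {ψ : ℝ → ℝ} {t : ℝ} (hψ : DifferentiableAt ℝ ψ t)
    (hid : ∀ η ≤ t, ψ η = η) : deriv ψ t = 1 :=
  (uniqueDiffWithinAt_Iic t).eq_deriv _ hψ.hasDerivAt.hasDerivWithinAt
    ((hasDerivWithinAt_id t _).congr hid (hid t le_rfl))

section ConcaveOffIdentity

variable {ψ : ℝ → ℝ} {b c : ℝ}

theorem deriv_lt_one_of_deriv_deriv_neg (hψ : ContDiff ℝ 1 ψ) (hid : ∀ η ≤ b, ψ η = η)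
    (hconc : ∀ η ∈ Ioo b c, deriv (deriv ψ) η < 0) {x : ℝ} (hx : x ∈ Ioo b c) :
    deriv ψ x < 1 := by
  have hanti : StrictAntiOn (deriv ψ) (Ico b c) :=
    strictAntiOn_of_deriv_neg (convex_Ico b c) (hψ.continuous_deriv le_rfl).continuousOn
      (by rwa [interior_Ico])
  calc deriv ψ x < deriv ψ b := hanti ⟨le_rfl, hx.1.trans hx.2⟩ ⟨hx.1.le, hx.2⟩ hx.1
    _ = 1 := deriv_eq_one_of_eq_self_Iic (hψ.differentiable one_ne_zero b) hid

theorem lt_self_of_deriv_deriv_neg (hψ : ContDiff ℝ 1 ψ) (hid : ∀ η ≤ b, ψ η = η)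
    (hconc : ∀ η ∈ Ioo b c, deriv (deriv ψ) η < 0) {x : ℝ} (hx : x ∈ Ioo b c) : ψ x < x := by
  have hderiv : ∀ y ∈ Ioo b c, deriv (ψ - id) y < 0 := fun y hy => by
    rw [((hψ.differentiable one_ne_zero y).hasDerivAt.sub (hasDerivAt_id y)).deriv]
    linarith [deriv_lt_one_of_deriv_deriv_neg hψ hid hconc hy]
  have hanti : StrictAntiOn (ψ - id) (Ico b c) :=
    strictAntiOn_of_deriv_neg (convex_Ico b c)
      (hψ.continuous.sub continuous_id).continuousOn (by rwa [interior_Ico])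
  have hgap := hanti ⟨le_rfl, hx.1.trans hx.2⟩ ⟨hx.1.le, hx.2⟩ hx.1
  simp only [Pi.sub_apply, id, hid b le_rfl, sub_self] at hgap
  linarith

theorem mapsTo_Ioo_of_deriv_deriv_neg (hψ : ContDiff ℝ 1 ψ) (hid : ∀ η ≤ b, ψ η = η)
    (hpos : ∀ η ∈ Ioo b c, 0 < deriv ψ η) (hconc : ∀ η ∈ Ioo b c, deriv (deriv ψ) η < 0) :
    MapsTo ψ (Ioo b c) (Ioo b c) := by
  intro x hx
  have hmono : StrictMonoOn ψ (Ico b c) :=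
    strictMonoOn_of_deriv_pos (convex_Ico b c) hψ.continuous.continuousOn (by rwa [interior_Ico])
  have hbx := hmono ⟨le_rfl, hx.1.trans hx.2⟩ ⟨hx.1.le, hx.2⟩ hx.1
  rw [hid b le_rfl] at hbx
  exact ⟨hbx, (lt_self_of_deriv_deriv_neg hψ hid hconc hx).trans hx.2⟩

theorem strictMonoOn_comp_div_deriv {α : ℝ → ℝ} (hαcont : ContinuousOn α (Ico b c))
    (hαmono : Monotone α) (hαpos : ∀ u ∈ Ioo b c, 0 < α u)
    (hαdiff : DifferentiableOn ℝ α (Ioo b c)) (hψ : ContDiff ℝ 1 ψ) (hid : ∀ η ≤ b, ψ η = η)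
    (hpos : ∀ η ∈ Ioo b c, 0 < deriv ψ η) (hconc : ∀ η ∈ Ioo b c, deriv (deriv ψ) η < 0) :
    StrictMonoOn (fun t => α (ψ t) / deriv ψ t) (Ico b c) := by
  have hmaps := mapsTo_Ioo_of_deriv_deriv_neg hψ hid hpos hconc
  have hmapsIco : MapsTo ψ (Ico b c) (Ico b c) := by
    intro t ht
    rcases ht.1.eq_or_lt with rfl | hbt
    · rwa [hid _ le_rfl]
    · exact Ioo_subset_Ico_self (hmaps ⟨hbt, ht.2⟩)
  have hderiv_ne : ∀ t ∈ Ico b c, deriv ψ t ≠ 0 := by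
    intro t ht
    rcases ht.1.eq_or_lt with rfl | hbt
    · rw [deriv_eq_one_of_eq_self_Iic (hψ.differentiable one_ne_zero _) hid]
      exact one_ne_zero
    · exact (hpos t ⟨hbt, ht.2⟩).ne'
  refine strictMonoOn_of_deriv_pos (convex_Ico b c)
    ((hαcont.comp hψ.continuous.continuousOn hmapsIco).div
      (hψ.continuous_deriv le_rfl).continuousOn hderiv_ne) ?_
  rw [interior_Ico]
  intro x hx
  have hψx := hmaps hx
  have hψ'x := hpos x hx
  have hαψ : HasDerivAt (fun t => α (ψ t)) (deriv α (ψ x) * deriv ψ x) x :=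
    (hαdiff.differentiableAt (isOpen_Ioo.mem_nhds hψx)).hasDerivAt.comp x
      (hψ.differentiable one_ne_zero x).hasDerivAt
  have hψ' : HasDerivAt (deriv ψ) (deriv (deriv ψ) x) x :=
    (differentiableAt_of_deriv_ne_zero (hconc x hx).ne).hasDerivAt
  exact deriv_div_pos_of_hasDerivAt hαψ hψ' (hαpos _ hψx)
    (mul_nonneg hαmono.deriv_nonneg hψ'x.le) hψ'x (hconc x hx)

end ConcaveOffIdentity

theorem stmt_12_general (ξ β : ℝ) (hξ : 0 < ξ) (hβ : 0 < β)
    (α : ℝ → ℝ) (hαcont : Continuous α) (hαmono : StrictMono α) (hα0 : α 0 = 0)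
    (hαC1 : ContDiffOn ℝ 1 α (Set.Ioo (β * ξ) ξ))
    (ψ : ℝ → ℝ) (hψC1 : ContDiff ℝ 1 ψ)
    (hψid : ∀ η ≤ β * ξ, ψ η = η)
    (hψpos : ∀ η ∈ Set.Ioo (β * ξ) ξ, 0 < deriv ψ η)
    (hψconc : ∀ η ∈ Set.Ioo (β * ξ) ξ, deriv (deriv ψ) η < 0)
    (α₂ : ℝ → ℝ) (hα₂ : ∀ η, α₂ η = α (ψ η) / deriv ψ η) :
    StrictMonoOn α₂ (Set.Ioo 0 ξ) ∧ α₂ 0 = 0 := by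
  have hb : 0 < β * ξ := mul_pos hβ hξ
  have hα₂_le : ∀ η ≤ β * ξ, α₂ η = α η := fun η hη => by
    rw [hα₂, hψid η hη, deriv_eq_one_of_eq_self_Iic (hψC1.differentiable one_ne_zero η)
      fun t ht => hψid t (ht.trans hη), div_one]
  have hlow : StrictMonoOn α₂ (Iic (β * ξ)) :=
    (hαmono.strictMonoOn _).congr fun η hη => (hα₂_le η hη).symm
  have hhigh : StrictMonoOn α₂ (Ico (β * ξ) ξ) := by
    rw [funext hα₂]
    exact strictMonoOn_comp_div_deriv hαcont.continuousOn hαmono.monotone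
      (fun u hu => hα0 ▸ hαmono (hb.trans hu.1)) (hαC1.differentiableOn one_ne_zero) hψC1 hψid
      hψpos hψconc
  exact ⟨(hlow.Iio_of_Iic_of_Ico hhigh).mono Ioo_subset_Iio_self, by rw [hα₂_le 0 hb.le, hα0]⟩

theorem stmt_12 (ξ β : ℝ) (hξ : 0 < ξ) (hβ : 0 < β) (hβ1 : β < 1)
    (α : ℝ → ℝ) (hαcont : Continuous α) (hαmono : StrictMono α) (hα0 : α 0 = 0)
    (hαC1 : ContDiffOn ℝ 1 α (Set.Ioo (β * ξ) ξ))
    (hαder : AntitoneOn (deriv α) (Set.Ioo (β * ξ) ξ))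
    (ψ : ℝ → ℝ) (hψC1 : ContDiff ℝ 1 ψ)
    (hψid : ∀ η ≤ β * ξ, ψ η = η)
    (hψpos : ∀ η ∈ Set.Ioo (β * ξ) ξ, 0 < deriv ψ η)
    (hψanti : AntitoneOn (deriv ψ) (Set.Ioo (β * ξ) ξ))
    (hψconc : ∀ η ∈ Set.Ioo (β * ξ) ξ, deriv (deriv ψ) η < 0)
    (α₂ : ℝ → ℝ) (hα₂ : ∀ η, α₂ η = α (ψ η) / deriv ψ η) :
    StrictMonoOn α₂ (Set.Ioo 0 ξ) ∧ α₂ 0 = 0 :=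
  stmt_12_general ξ β hξ hβ α hαcont hαmono hα0 hαC1 ψ hψC1 hψid hψpos hψconc α₂ hα₂
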